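/- arXiv:2602.20104 — 2 statements merged into one kernel-verified Lean document; each statement's English description precedes it below -/
import Mathlib

section
/- Let L_a be λ_max^a-smooth with minimizer θ_a*, L_c be λ_min^c-strongly convex with minimizer θ_c* ≠ θ_a*. Suppose in a neighborhood of θ_a* the normalized inner product -⟨∇L_c(θ),∇L_a(θ)⟩/(‖∇L_a(θ)‖·‖∇L_c(θ)‖) ≥ c₀ > 0. Then the unit tradeoff T(θ) = -⟨∇L_c(θ),∇L_a(θ)⟩/‖∇L_a(θ)‖² satisfies T(θ) ≥ (λ_min^c·c₀/λ_max^a)·(d_c/d_a), hence T(θ) → +∞ as θ → θ_a* (since d_a → 0 while d_c stays bounded away from 0). -/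
open Filter

/-- Divergence of the unit tradeoff near the aligned optimum: if near θ_a* the
gradients remain opposed (-cos φ(θ) ≥ c₀ > 0), then
T(θ) ≥ (λ_min^c·c₀/λ_max^a)·(d_c/d_a), and T(θ) → +∞ as θ → θ_a* (within the
set where ∇L_a ≠ 0). -/
theorem unit_tradeoff_blowup {d : ℕ} (lamMaxA lamMinC c₀ : ℝ)
    (hA : 0 < lamMaxA) (hC : 0 < lamMinC) (hc₀ : 0 < c₀)
    (La Lc : EuclideanSpace ℝ (Fin d) → ℝ)
    (hLa : Differentiable ℝ La) (hLc : Differentiable ℝ Lc)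
    (hsmoothA : ∀ θ θ' : EuclideanSpace ℝ (Fin d),
      ‖gradient La θ - gradient La θ'‖ ≤ lamMaxA * ‖θ - θ'‖)
    (hscC : ∀ θ θ' : EuclideanSpace ℝ (Fin d),
      lamMinC * ‖θ - θ'‖ ^ 2 ≤ (inner ℝ (gradient Lc θ - gradient Lc θ') (θ - θ') : ℝ))
    (θaStar θcStar : EuclideanSpace ℝ (Fin d))
    (hθa : gradient La θaStar = 0) (hθc : gradient Lc θcStar = 0)
    (hne : θaStar ≠ θcStar)
    (U : Set (EuclideanSpace ℝ (Fin d))) (hU : U ∈ nhds θaStar)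
    (hopp : ∀ θ ∈ U, gradient La θ ≠ 0 →
      c₀ ≤ -((inner ℝ (gradient La θ) (gradient Lc θ) : ℝ) /
              (‖gradient La θ‖ * ‖gradient Lc θ‖))) :
    (∀ θ ∈ U, gradient La θ ≠ 0 →
      (lamMinC * c₀ / lamMaxA) * (‖θ - θcStar‖ / ‖θ - θaStar‖) ≤
        -((inner ℝ (gradient Lc θ) (gradient La θ) : ℝ) / ‖gradient La θ‖ ^ 2)) ∧
    Tendsto
      (fun θ => -((inner ℝ (gradient Lc θ) (gradient La θ) : ℝ) / ‖gradient La θ‖ ^ 2))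
      (nhdsWithin θaStar {θ | gradient La θ ≠ 0}) atTop := by
  -- gradient lower bound from strong convexity
  have hgc : ∀ θ : EuclideanSpace ℝ (Fin d),
      lamMinC * ‖θ - θcStar‖ ≤ ‖gradient Lc θ‖ := by
    intro θ
    have h1 := hscC θ θcStar
    rw [hθc, sub_zero] at h1
    have h2 : (inner ℝ (gradient Lc θ) (θ - θcStar) : ℝ) ≤ ‖gradient Lc θ‖ * ‖θ - θcStar‖ :=
      real_inner_le_norm _ _
    rcases eq_or_lt_of_le (norm_nonneg (θ - θcStar)) with h0 | h0
    · rw [← h0, mul_zero]; exact norm_nonneg _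
    · have := h1.trans h2
      rw [sq] at this
      nlinarith
  -- gradient upper bound from smoothness
  have hga : ∀ θ : EuclideanSpace ℝ (Fin d),
      ‖gradient La θ‖ ≤ lamMaxA * ‖θ - θaStar‖ := by
    intro θ
    have := hsmoothA θ θaStar
    rwa [hθa, sub_zero] at this
  have key : ∀ θ ∈ U, gradient La θ ≠ 0 →
      (lamMinC * c₀ / lamMaxA) * (‖θ - θcStar‖ / ‖θ - θaStar‖) ≤
        -((inner ℝ (gradient Lc θ) (gradient La θ) : ℝ) / ‖gradient La θ‖ ^ 2) := by
    intro θ hθU hθa0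
    set a := gradient La θ with ha
    set c := gradient Lc θ with hc'
    have hna : 0 < ‖a‖ := norm_pos_iff.mpr hθa0
    have hnc : 0 < ‖c‖ := by
      rcases eq_or_lt_of_le (norm_nonneg c) with h0 | h0
      · exfalso
        have hc0 : c = 0 := by simpa using h0.symm
        have := hopp θ hθU hθa0
        rw [← ha, ← hc', hc0] at this
        simp at this
        linarith
      · exact h0
    have hopp' := hopp θ hθU hθa0
    rw [← ha, ← hc'] at hopp'
    have hmul : c₀ * (‖a‖ * ‖c‖) ≤ -(inner ℝ a c : ℝ) := by
      have hpos : 0 < ‖a‖ * ‖c‖ := mul_pos hna hnc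
      have h' : c₀ ≤ -(inner ℝ a c : ℝ) / (‖a‖ * ‖c‖) := by rw [neg_div]; exact hopp'
      have := (le_div_iff₀ hpos).mp h'
      linarith
    have hda : 0 < ‖θ - θaStar‖ := by
      have : θ ≠ θaStar := by
        intro h; exact hθa0 (by rw [ha, h, hθa])
      simpa [sub_eq_zero] using norm_pos_iff.mpr (sub_ne_zero.mpr this)
    -- step 1: (lamMinC*c₀/lamMaxA) * (dc/da) ≤ c₀ * ‖c‖ / ‖a‖
    have step1 : (lamMinC * c₀ / lamMaxA) * (‖θ - θcStar‖ / ‖θ - θaStar‖)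
        ≤ c₀ * ‖c‖ / ‖a‖ := by
      have heq : (lamMinC * c₀ / lamMaxA) * (‖θ - θcStar‖ / ‖θ - θaStar‖)
          = (c₀ * (lamMinC * ‖θ - θcStar‖)) / (lamMaxA * ‖θ - θaStar‖) := by
        field_simp
      rw [heq]
      apply div_le_div₀ (by positivity)
      · exact mul_le_mul_of_nonneg_left (hgc θ) hc₀.le
      · exact hna
      · exact hga θ
    -- step 2: c₀ * ‖c‖ / ‖a‖ ≤ -(inner ℝ c a)/‖a‖^2
    have step2 : c₀ * ‖c‖ / ‖a‖ ≤ -((inner ℝ c a : ℝ) / ‖a‖ ^ 2) := by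
      have heq : -((inner ℝ c a : ℝ) / ‖a‖ ^ 2) = (-(inner ℝ a c : ℝ)) / ‖a‖ ^ 2 := by
        rw [real_inner_comm]; ring
      have heq2 : c₀ * ‖c‖ / ‖a‖ = (c₀ * (‖a‖ * ‖c‖)) / ‖a‖ ^ 2 := by
        field_simp
      rw [heq, heq2]
      exact (div_le_div_iff_of_pos_right (by positivity : (0:ℝ) < ‖a‖ ^ 2)).mpr hmul
    linarith [step1, step2]
  refine ⟨key, ?_⟩
  set S : Set (EuclideanSpace ℝ (Fin d)) := {θ | gradient La θ ≠ 0} with hS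
  set l := nhdsWithin θaStar S with hl
  have hKpos : 0 < lamMinC * c₀ / lamMaxA := by positivity
  have hdcpos : 0 < ‖θaStar - θcStar‖ := norm_pos_iff.mpr (sub_ne_zero.mpr hne)
  have t1 : Tendsto (fun θ : EuclideanSpace ℝ (Fin d) => ‖θ - θcStar‖) l
      (nhds ‖θaStar - θcStar‖) := by
    apply tendsto_nhdsWithin_of_tendsto_nhds
    have hcont : Continuous (fun θ : EuclideanSpace ℝ (Fin d) => ‖θ - θcStar‖) :=
      (continuous_id.sub continuous_const).norm
    exact hcont.tendsto θaStar
  have t2 : Tendsto (fun θ : EuclideanSpace ℝ (Fin d) => ‖θ - θaStar‖⁻¹) l atTop := by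
    apply Tendsto.comp tendsto_inv_nhdsGT_zero
    rw [tendsto_nhdsWithin_iff]
    constructor
    · apply tendsto_nhdsWithin_of_tendsto_nhds
      have hcont : Continuous (fun θ : EuclideanSpace ℝ (Fin d) => ‖θ - θaStar‖) :=
        (continuous_id.sub continuous_const).norm
      exact hcont.tendsto' θaStar 0 (by simp)
    · filter_upwards [self_mem_nhdsWithin] with θ hθ
      have hθne : θ ≠ θaStar := by
        intro h; rw [hS] at hθ; rw [h] at hθ; exact hθ hθa
      exact norm_pos_iff.mpr (sub_ne_zero.mpr hθne)
  have t3 : Tendsto (fun θ : EuclideanSpace ℝ (Fin d) =>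
      (lamMinC * c₀ / lamMaxA) * (‖θ - θcStar‖ / ‖θ - θaStar‖)) l atTop := by
    have := Tendsto.pos_mul_atTop hdcpos t1 t2
    have h2 := Tendsto.const_mul_atTop hKpos this
    refine h2.congr fun θ => ?_
    simp [div_eq_mul_inv]
  apply tendsto_atTop_mono' l _ t3
  filter_upwards [self_mem_nhdsWithin, mem_nhdsWithin_of_mem_nhds hU] with θ hθS hθU
  exact key θ hθU hθS
end

section
/- Let L̃_a, L_c be μ-strongly convex with minimizers θ_a*, θ_c*, D = ‖θ_a* - θ_c*‖, p ∈ [0,1], α ∈ (1/2,1], κ = 2α-1. Define L_a(θ) = (1-α) + κ·L̃_a(θ), g(θ) = p·L_a(θ) + (1-p)·L_c(θ), L_single* = inf_θ g(θ), and L_adapt = p·L_a(θ_a*) + (1-p)·L_c(θ_c*). Then L_single* - L_adapt ≥ (κ·μ/2)·p·(1-p)·D². -/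
open Filter Topology

lemma strong_growth {d : ℕ} {μ : ℝ} {f : EuclideanSpace ℝ (Fin d) → ℝ}
    {m : EuclideanSpace ℝ (Fin d)}
    (hf : StrongConvexOn Set.univ μ f) (hmin : ∀ θ, f m ≤ f θ)
    (θ : EuclideanSpace ℝ (Fin d)) :
    f m + μ / 2 * ‖m - θ‖ ^ 2 ≤ f θ := by
  set φ : ℝ := μ / 2 * ‖m - θ‖ ^ 2 with hφ
  have key : ∀ a b : ℝ, 0 ≤ a → 0 < b → a + b = 1 → a * φ ≤ f θ - f m := by
    intro a b ha hb hab
    have h := hf.2 (Set.mem_univ m) (Set.mem_univ θ) ha hb.le hab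
    have h2 := hmin (a • m + b • θ)
    simp only [smul_eq_mul] at h
    have hA : f m ≤ a * f m + b * f θ - a * b * φ := by rw [hφ]; linarith
    have hfm : (1 - a) * f m = b * f m := by
      have : b = 1 - a := by linarith
      rw [this]
    have h3 : b * (a * φ) ≤ b * (f θ - f m) := by nlinarith [hA, hfm]
    exact le_of_mul_le_mul_left h3 hb
  have lim : Tendsto (fun n : ℕ => (1 - 1/(n+1 : ℝ)) * φ) atTop (𝓝 φ) := by
    have h1 : Tendsto (fun n : ℕ => (1 - 1/(n+1 : ℝ))) atTop (𝓝 1) := by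
      have := tendsto_one_div_add_atTop_nhds_zero_nat (𝕜 := ℝ)
      have := this.const_sub (1 : ℝ)
      simpa using this
    simpa using h1.mul_const φ
  have hle : ∀ n : ℕ, (1 - 1/(n+1 : ℝ)) * φ ≤ f θ - f m := by
    intro n
    have hn : (0:ℝ) < 1/(n+1 : ℝ) := by positivity
    have hn1 : (1:ℝ)/(n+1 : ℝ) ≤ 1 := by
      rw [div_le_one (by positivity)]; linarith [Nat.cast_nonneg (α := ℝ) n]
    exact key _ _ (by linarith) hn (by ring)
  have := le_of_tendsto lim (Filter.Eventually.of_forall hle)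
  linarith

/-- Adaptive AI performance gain: with L_a(θ) = (1-α) + κ·L̃_a(θ), κ = 2α-1,
the best single model g(θ) = p·L_a(θ) + (1-p)·L_c(θ) satisfies
L_single* - L_adapt ≥ (κμ/2)·p(1-p)·D². -/
theorem adaptive_gain_team {d : ℕ} (μ : ℝ) (hμ : 0 < μ)
    (La' Lc : EuclideanSpace ℝ (Fin d) → ℝ)
    (hLa : StrongConvexOn Set.univ μ La') (hLc : StrongConvexOn Set.univ μ Lc)
    (θaStar θcStar : EuclideanSpace ℝ (Fin d))
    (hmina : ∀ θ, La' θaStar ≤ La' θ) (hminc : ∀ θ, Lc θcStar ≤ Lc θ)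
    (p α : ℝ) (hp : p ∈ Set.Icc (0:ℝ) 1) (hα : α ∈ Set.Ioc (1/2 : ℝ) 1)
    (κ : ℝ) (hκ : κ = 2 * α - 1)
    (La : EuclideanSpace ℝ (Fin d) → ℝ)
    (hLaDef : ∀ θ, La θ = (1 - α) + κ * La' θ) :
    (κ * μ / 2) * p * (1 - p) * ‖θaStar - θcStar‖ ^ 2 ≤
      (⨅ θ : EuclideanSpace ℝ (Fin d), p * La θ + (1 - p) * Lc θ) -
        (p * La θaStar + (1 - p) * Lc θcStar) := by
  obtain ⟨hp0, hp1⟩ := hp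
  obtain ⟨hα1, hα2⟩ := hα
  have hκ0 : 0 < κ := by rw [hκ]; linarith
  have hκ1 : κ ≤ 1 := by rw [hκ]; linarith
  rw [le_sub_iff_add_le]
  refine le_ciInf fun θ => ?_
  have ha := strong_growth hLa hmina θ
  have hc := strong_growth hLc hminc θ
  set x := ‖θaStar - θ‖ with hx
  set y := ‖θcStar - θ‖ with hy
  set D := ‖θaStar - θcStar‖ with hD
  have hDxy : D ≤ x + y := by
    calc D = ‖(θaStar - θ) - (θcStar - θ)‖ := by
          rw [hD, sub_sub_sub_cancel_right]
    _ ≤ x + y := norm_sub_le _ _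
  have hx0 : 0 ≤ x := norm_nonneg _
  have hy0 : 0 ≤ y := norm_nonneg _
  have hD0 : 0 ≤ D := norm_nonneg _
  rw [hLaDef θ, hLaDef θaStar]
  -- key algebraic inequality
  have hDsq : D ^ 2 ≤ (x + y) ^ 2 := by nlinarith
  have key1 : κ * p * (1 - p) * D ^ 2 ≤ κ * p * (1 - p) * (x + y) ^ 2 := by
    have h0 : 0 ≤ κ * p * (1 - p) := by
      apply mul_nonneg (mul_nonneg hκ0.le hp0); linarith
    exact mul_le_mul_of_nonneg_left hDsq h0
  have key2 : κ * p * (1 - p) * (x + y) ^ 2 ≤ κ * p * x ^ 2 + (1 - p) * y ^ 2 := by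
    nlinarith [mul_nonneg hκ0.le (sq_nonneg (p * x - (1 - p) * y)),
      mul_nonneg (mul_nonneg (by linarith : (0:ℝ) ≤ 1 - p) (by linarith : (0:ℝ) ≤ 1 - κ))
        (sq_nonneg y)]
  have key3 : μ / 2 * (κ * p * (1 - p) * D ^ 2) ≤ μ / 2 * (κ * p * x ^ 2 + (1 - p) * y ^ 2) :=
    mul_le_mul_of_nonneg_left (key1.trans key2) (by positivity)
  have hpa : p * κ * (μ / 2 * x ^ 2) ≤ p * κ * (La' θ - La' θaStar) :=
    mul_le_mul_of_nonneg_left (by linarith) (by positivity)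
  have hpc : (1 - p) * (μ / 2 * y ^ 2) ≤ (1 - p) * (Lc θ - Lc θcStar) :=
    mul_le_mul_of_nonneg_left (by linarith) (by linarith)
  nlinarith [key3, hpa, hpc]
end
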